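/- Let 0 < c₀ ≤ 2, K₀ = √((2−c₀)/c₀), β(t) = (c₀K₀/2)(2πt+k). Then X(t) = 2 arccot(K₀ coth(β(t))) satisfies dX/dt = 2π cos X + 2π(c₀−1) for t with β(t) ≠ 0, and X(t) = 2 arccot(K₀ tanh(β(t))) satisfies the same ODE for all t. -/

import Mathlib

open Real

noncomputable def arccot (y : ℝ) : ℝ := π / 2 - Real.arctan y

noncomputable def coth (y : ℝ) : ℝ := Real.cosh y / Real.sinh y

/-!
Both `tanh` and `coth` solve the Riccati equation `u' = 1 - u²`, hence so do `tanh ∘ β` and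
`coth ∘ β` up to the factor `β' = π c₀ K₀`. For `y = K₀ u` one has `cos (2 arccot y) = (y² - 1)/(y² + 1)`,
and the identity `c₀ K₀² = 2 - c₀` turns the chain-rule derivative of `2 arccot (K₀ u)` into
`2π cos X + 2π (c₀ - 1)`.
-/

theorem Real.hasDerivAt_tanh (x : ℝ) : HasDerivAt tanh (1 - tanh x ^ 2) x := by
  have hcosh : cosh x ≠ 0 := (cosh_pos x).ne'
  have hquot := (hasDerivAt_sinh x).div (hasDerivAt_cosh x) hcosh
  refine (hquot.congr_deriv ?_).congr_of_eventuallyEq (.of_forall tanh_eq_sinh_div_cosh)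
  rw [tanh_eq_sinh_div_cosh]
  field_simp

theorem hasDerivAt_coth {x : ℝ} (hx : x ≠ 0) : HasDerivAt coth (1 - coth x ^ 2) x := by
  have hsinh : sinh x ≠ 0 := sinh_ne_zero.mpr hx
  refine ((hasDerivAt_cosh x).div (hasDerivAt_sinh x) hsinh).congr_deriv ?_
  unfold coth
  field_simp

theorem cos_two_mul_arccot (y : ℝ) : cos (2 * arccot y) = (y ^ 2 - 1) / (y ^ 2 + 1) := by
  rw [arccot, mul_sub, mul_div_cancel₀ _ two_ne_zero, cos_pi_sub, cos_two_mul, cos_sq_arctan]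
  field_simp
  ring

theorem HasDerivAt.arccot {f : ℝ → ℝ} {f' x : ℝ} (hf : HasDerivAt f f' x) :
    HasDerivAt (fun s => arccot (f s)) (-(1 / (1 + f x ^ 2) * f')) x :=
  ((hasDerivAt_const x (π / 2)).sub hf.arctan).congr_deriv (zero_sub _)

theorem hasDerivAt_two_mul_arccot_of_riccati {ω c K : ℝ} (hcK : c * K ^ 2 = 2 - c)
    {u : ℝ → ℝ} {t : ℝ} (hu : HasDerivAt u (ω * c * K * (1 - u t ^ 2)) t) :
    HasDerivAt (fun s => 2 * arccot (K * u s))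
      (2 * ω * cos (2 * arccot (K * u t)) + 2 * ω * (c - 1)) t := by
  refine ((hu.const_mul K).arccot.const_mul 2).congr_deriv ?_
  rw [cos_two_mul_arccot]
  field_simp
  linear_combination -(1 + K ^ 2 * u t ^ 2) * ω * hcK

theorem X_solves_ode_c0_in_zero_two (c₀ k : ℝ) (hc₀ : 0 < c₀) (hc₀' : c₀ ≤ 2)
    (K₀ : ℝ) (hK₀ : K₀ = Real.sqrt ((2 - c₀) / c₀))
    (β : ℝ → ℝ) (hβ : ∀ t, β t = (c₀ * K₀ / 2) * (2 * π * t + k))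
    (X₁ X₂ : ℝ → ℝ)
    (hX₁ : ∀ t, X₁ t = 2 * arccot (K₀ * coth (β t)))
    (hX₂ : ∀ t, X₂ t = 2 * arccot (K₀ * Real.tanh (β t))) :
    (∀ t : ℝ, β t ≠ 0 →
      HasDerivAt X₁ (2 * π * Real.cos (X₁ t) + 2 * π * (c₀ - 1)) t) ∧
    (∀ t : ℝ,
      HasDerivAt X₂ (2 * π * Real.cos (X₂ t) + 2 * π * (c₀ - 1)) t) := by
  have hcK : c₀ * K₀ ^ 2 = 2 - c₀ := by
    rw [hK₀, sq_sqrt (div_nonneg (by linarith) hc₀.le)]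
    field_simp
  have hβ' : ∀ t, HasDerivAt β (π * c₀ * K₀) t := fun t => by
    rw [funext hβ]
    refine ((((hasDerivAt_id t).const_mul (2 * π)).add_const k).const_mul
      (c₀ * K₀ / 2)).congr_deriv ?_
    ring
  obtain rfl := funext hX₁
  obtain rfl := funext hX₂
  refine ⟨fun t ht => hasDerivAt_two_mul_arccot_of_riccati hcK ?_,
    fun t => hasDerivAt_two_mul_arccot_of_riccati hcK ?_⟩
  · exact ((hasDerivAt_coth ht).comp t (hβ' t)).congr_deriv (by ring)
  · exact ((hasDerivAt_tanh (β t)).comp t (hβ' t)).congr_deriv (by ring)
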